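/- Let G be a graph and let v be a vertex lying on an induced path u, v, w where v has degree exactly 2 in G (its only neighbours are u and w). Let G' be the graph obtained from G by deleting u, v, w and adding a new vertex z adjacent to (N(u) ∪ N(w)) \ {u,v,w}. Then α(G') = α(G) - 1. -/
import Mathlib


/-- A set of vertices is independent if no two of its members are adjacent. -/
def IsIndepSet {V : Type*} (G : SimpleGraph V) (s : Set V) : Prop :=
  s.Pairwise fun a b => ¬ G.Adj a b

/-- The independence number: the largest cardinality of an independent set. -/
noncomputable def indepNum {V : Type*} (G : SimpleGraph V) : ℕ :=
  sSup {n | ∃ s : Finset V, IsIndepSet G ↑s ∧ s.card = n}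

lemma indep_bdd {V : Type*} [Fintype V] (G : SimpleGraph V) :
    BddAbove {n | ∃ s : Finset V, IsIndepSet G ↑s ∧ s.card = n} :=
  ⟨Fintype.card V, fun n ⟨s, _, hc⟩ => hc ▸ s.card_le_univ⟩

lemma card_le_indepNum {V : Type*} [Fintype V] {G : SimpleGraph V} {s : Finset V}
    (h : IsIndepSet G ↑s) : s.card ≤ indepNum G :=
  le_csSup (indep_bdd G) ⟨s, h, rfl⟩

lemma exists_indep_max {V : Type*} [Fintype V] (G : SimpleGraph V) :
    ∃ s : Finset V, IsIndepSet G ↑s ∧ s.card = indepNum G := by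
  have hne : {n | ∃ s : Finset V, IsIndepSet G ↑s ∧ s.card = n}.Nonempty :=
    ⟨0, ∅, by simp [IsIndepSet], by simp⟩
  exact Nat.sSup_mem hne (indep_bdd G)

@[reducible] def foldP {V : Type*} [DecidableEq V] (u v w : V) : V → Prop :=
  fun x => x ≠ u ∧ x ≠ v ∧ x ≠ w

/-- Vertex folding: if `u, v, w` is an induced path and the only neighbours of `v`
are `u` and `w`, then deleting `u, v, w` and adding a new vertex `z` adjacent to
`(N(u) ∪ N(w)) \ {u, v, w}` decreases the independence number by exactly 1. -/
theorem vertex_folding {V : Type*} [Fintype V] [DecidableEq V]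
    (G : SimpleGraph V) (u v w : V)
    (huv : G.Adj u v) (hvw : G.Adj v w) (huw : ¬ G.Adj u w) (hne : u ≠ w)
    (hv : ∀ t, G.Adj v t → t = u ∨ t = w) :
    indepNum (SimpleGraph.fromRel
      (fun a b : {x : V // x ≠ u ∧ x ≠ v ∧ x ≠ w} ⊕ Unit =>
        (∃ a' b', a = Sum.inl a' ∧ b = Sum.inl b' ∧ G.Adj a'.1 b'.1) ∨
        (∃ a', a = Sum.inl a' ∧ b = Sum.inr () ∧ (G.Adj a'.1 u ∨ G.Adj a'.1 w))))
    = indepNum G - 1 := by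
  classical
  set G' := SimpleGraph.fromRel
      (fun a b : {x : V // x ≠ u ∧ x ≠ v ∧ x ≠ w} ⊕ Unit =>
        (∃ a' b', a = Sum.inl a' ∧ b = Sum.inl b' ∧ G.Adj a'.1 b'.1) ∨
        (∃ a', a = Sum.inl a' ∧ b = Sum.inr () ∧ (G.Adj a'.1 u ∨ G.Adj a'.1 w))) with hG'
  have hadj_ll : ∀ a b : {x : V // x ≠ u ∧ x ≠ v ∧ x ≠ w},
      G'.Adj (Sum.inl a) (Sum.inl b) ↔ a ≠ b ∧ G.Adj a.1 b.1 := by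
    intro a b
    rw [hG', SimpleGraph.fromRel_adj]
    constructor
    · rintro ⟨hab, (⟨a', b', ha, hb, hadj⟩ | ⟨a', ha, hb, _⟩) | (⟨a', b', ha, hb, hadj⟩ | ⟨a', ha, hb, _⟩)⟩
      · cases ha; cases hb; exact ⟨fun h => hab (by rw [h]), hadj⟩
      · exact absurd hb (by simp)
      · cases ha; cases hb; exact ⟨fun h => hab (by rw [h]), hadj.symm⟩
      · exact absurd hb (by simp)
    · rintro ⟨hab, hadj⟩
      exact ⟨fun h' => hab (Sum.inl_injective h'), Or.inl (Or.inl ⟨a, b, rfl, rfl, hadj⟩)⟩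
  have hadj_lr : ∀ a : {x : V // x ≠ u ∧ x ≠ v ∧ x ≠ w},
      G'.Adj (Sum.inl a) (Sum.inr ()) ↔ (G.Adj a.1 u ∨ G.Adj a.1 w) := by
    intro a
    rw [hG', SimpleGraph.fromRel_adj]
    constructor
    · rintro ⟨-, (⟨a', b', ha, hb, hadj⟩ | ⟨a', ha, hb, hadj⟩) | (⟨a', b', ha, hb, hadj⟩ | ⟨a', ha, hb, hadj⟩)⟩
      · exact absurd hb (by simp)
      · cases ha; exact hadj
      · exact absurd ha (by simp)
      · exact absurd ha (by simp)
    · intro h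
      exact ⟨by simp, Or.inl (Or.inr ⟨a, rfl, rfl, h⟩)⟩
  have hub : indepNum G' + 1 ≤ indepNum G := by
    obtain ⟨T, hT, hTc⟩ := exists_indep_max G'
    set g : ({x : V // x ≠ u ∧ x ≠ v ∧ x ≠ w} ⊕ Unit) → V :=
      Sum.elim Subtype.val (fun _ => v) with hg
    by_cases hz : (Sum.inr () : {x : V // x ≠ u ∧ x ≠ v ∧ x ≠ w} ⊕ Unit) ∈ T
    · -- z ∈ T : replace z by u and w
      set T' := T.erase (Sum.inr ()) with hT'
      have hTl : ∀ x ∈ T', ∃ a, x = Sum.inl a ∧ Sum.inl a ∈ T := by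
        intro x hx
        rcases x with a | u1
        · exact ⟨a, rfl, (Finset.mem_erase.1 hx).2⟩
        · cases u1; exact absurd rfl (Finset.mem_erase.1 hx).1
      set S : Finset V := insert u (insert w (T'.image g)) with hSdef
      have himg : ∀ x ∈ T'.image g, (x ≠ u ∧ x ≠ v ∧ x ≠ w) ∧
          ∃ a : {x : V // x ≠ u ∧ x ≠ v ∧ x ≠ w}, Sum.inl a ∈ T ∧ a.1 = x := by
        intro x hx
        obtain ⟨y, hy, hgy⟩ := Finset.mem_image.1 hx
        obtain ⟨a, rfl, haT⟩ := hTl y hy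
        simp only [hg, Sum.elim_inl] at hgy
        subst hgy
        exact ⟨a.2, a, haT, rfl⟩
      -- key: elements coming from T are non-adjacent to u and w
      have hnadj : ∀ a : {x : V // x ≠ u ∧ x ≠ v ∧ x ≠ w}, Sum.inl a ∈ T →
          ¬ G.Adj a.1 u ∧ ¬ G.Adj a.1 w := by
        intro a haT
        have this : ¬ G'.Adj (Sum.inl a) (Sum.inr ()) :=
          hT (Finset.mem_coe.2 haT) (Finset.mem_coe.2 hz) (by simp)
        rw [hadj_lr] at this
        exact ⟨fun h => this (Or.inl h), fun h => this (Or.inr h)⟩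
      have hSind : IsIndepSet G ↑S := by
        intro x hx y hy hxy
        simp only [hSdef, Finset.coe_insert, Set.mem_insert_iff, Finset.mem_coe] at hx hy
        rcases hx with rfl | rfl | hx <;> rcases hy with rfl | rfl | hy
        · exact absurd rfl hxy
        · exact huw
        · obtain ⟨-, a, haT, rfl⟩ := himg _ hy
          exact fun h => (hnadj a haT).1 h.symm
        · exact fun h => huw h.symm
        · exact absurd rfl hxy
        · obtain ⟨-, a, haT, rfl⟩ := himg _ hy
          exact fun h => (hnadj a haT).2 h.symm
        · obtain ⟨-, a, haT, rfl⟩ := himg _ hx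
          exact (hnadj a haT).1
        · obtain ⟨-, a, haT, rfl⟩ := himg _ hx
          exact (hnadj a haT).2
        · obtain ⟨-, a, haT, rfl⟩ := himg _ hx
          obtain ⟨-, b, hbT, rfl⟩ := himg _ hy
          intro hadj
          have hab : (Sum.inl a : {x : V // x ≠ u ∧ x ≠ v ∧ x ≠ w} ⊕ Unit) ≠ Sum.inl b :=
            fun h => hxy (congrArg g h)
          exact hT (Finset.mem_coe.2 haT) (Finset.mem_coe.2 hbT) hab
            ((hadj_ll a b).2 ⟨fun h => hxy (congrArg Subtype.val h), hadj⟩)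
      have hinj : Set.InjOn g ↑T' := by
        intro x hx y hy hxy
        obtain ⟨a, rfl, -⟩ := hTl x (Finset.mem_coe.1 hx)
        obtain ⟨b, rfl, -⟩ := hTl y (Finset.mem_coe.1 hy)
        simp only [hg, Sum.elim_inl] at hxy
        exact congrArg Sum.inl (Subtype.ext hxy)
      have hwimg : w ∉ T'.image g := fun h => ((himg w h).1.2.2) rfl
      have huimg : u ∉ insert w (T'.image g) := by
        simp only [Finset.mem_insert]
        rintro (rfl | h)
        · exact hne rfl
        · exact ((himg u h).1.1) rfl
      have hcardT : 1 ≤ T.card := Finset.card_pos.2 ⟨_, hz⟩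
      have hScard : S.card = T.card + 1 := by
        rw [hSdef, Finset.card_insert_of_notMem huimg, Finset.card_insert_of_notMem hwimg,
          Finset.card_image_of_injOn hinj, hT', Finset.card_erase_of_mem hz]
        omega
      have := card_le_indepNum hSind
      omega
    · -- z ∉ T : add v
      have hTl : ∀ x ∈ T, ∃ a, x = Sum.inl a := by
        intro x hx
        rcases x with a | u1
        · exact ⟨a, rfl⟩
        · cases u1; exact absurd hx hz
      set S : Finset V := insert v (T.image g) with hSdef
      have himg : ∀ x ∈ T.image g, (x ≠ u ∧ x ≠ v ∧ x ≠ w) ∧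
          ∃ a : {x : V // x ≠ u ∧ x ≠ v ∧ x ≠ w}, Sum.inl a ∈ T ∧ a.1 = x := by
        intro x hx
        obtain ⟨y, hy, hgy⟩ := Finset.mem_image.1 hx
        obtain ⟨a, rfl⟩ := hTl y hy
        simp only [hg, Sum.elim_inl] at hgy
        subst hgy
        exact ⟨a.2, a, hy, rfl⟩
      have hSind : IsIndepSet G ↑S := by
        intro x hx y hy hxy
        simp only [hSdef, Finset.coe_insert, Set.mem_insert_iff, Finset.mem_coe] at hx hy
        rcases hx with rfl | hx <;> rcases hy with rfl | hy
        · exact absurd rfl hxy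
        · obtain ⟨⟨h1, -, h3⟩, -⟩ := himg _ hy
          intro h
          rcases hv _ h with rfl | rfl
          · exact h1 rfl
          · exact h3 rfl
        · obtain ⟨⟨h1, -, h3⟩, -⟩ := himg _ hx
          intro h
          rcases hv _ h.symm with rfl | rfl
          · exact h1 rfl
          · exact h3 rfl
        · obtain ⟨-, a, haT, rfl⟩ := himg _ hx
          obtain ⟨-, b, hbT, rfl⟩ := himg _ hy
          intro hadj
          exact hT (Finset.mem_coe.2 haT) (Finset.mem_coe.2 hbT)
            (fun h => hxy (congrArg g h))
            ((hadj_ll a b).2 ⟨fun h => hxy (congrArg Subtype.val h), hadj⟩)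
      have hinj : Set.InjOn g ↑T := by
        intro x hx y hy hxy
        obtain ⟨a, rfl⟩ := hTl x (Finset.mem_coe.1 hx)
        obtain ⟨b, rfl⟩ := hTl y (Finset.mem_coe.1 hy)
        simp only [hg, Sum.elim_inl] at hxy
        exact congrArg Sum.inl (Subtype.ext hxy)
      have hvimg : v ∉ T.image g := fun h => ((himg v h).1.2.1) rfl
      have hScard : S.card = T.card + 1 := by
        rw [hSdef, Finset.card_insert_of_notMem hvimg, Finset.card_image_of_injOn hinj]
      have := card_le_indepNum hSind
      omega
  have hlb : indepNum G - 1 ≤ indepNum G' := by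
    obtain ⟨S, hS, hSc⟩ := exists_indep_max G
    set emb : {x : V // foldP u v w x} ↪ ({x : V // x ≠ u ∧ x ≠ v ∧ x ≠ w} ⊕ Unit) :=
      ⟨Sum.inl, Sum.inl_injective⟩ with hemb
    set T0 : Finset ({x : V // x ≠ u ∧ x ≠ v ∧ x ≠ w} ⊕ Unit) :=
      (S.subtype (foldP u v w)).map emb with hT0
    have hmemT0 : ∀ x ∈ T0, ∃ a : {x : V // x ≠ u ∧ x ≠ v ∧ x ≠ w},
        x = Sum.inl a ∧ a.1 ∈ S := by
      intro x hx
      obtain ⟨b, hb, rfl⟩ := Finset.mem_map.1 hx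
      exact ⟨b, rfl, (Finset.mem_subtype.1 hb)⟩
    have hT0ind : IsIndepSet G' ↑T0 := by
      intro x hx y hy hxy
      obtain ⟨a, rfl, haS⟩ := hmemT0 x (Finset.mem_coe.1 hx)
      obtain ⟨b, rfl, hbS⟩ := hmemT0 y (Finset.mem_coe.1 hy)
      intro hadj
      obtain ⟨hab, hGab⟩ := (hadj_ll a b).1 hadj
      exact hS haS hbS (fun h => hab (Subtype.ext h)) hGab
    have hT0card : T0.card = (S.filter (foldP u v w)).card := by
      rw [hT0, Finset.card_map, Finset.card_subtype]
    have hfilter : (S.filter (foldP u v w)).card + (S.filter (fun x => ¬ foldP u v w x)).card = S.card :=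
      Finset.card_filter_add_card_filter_not (p := foldP u v w)
    by_cases hb : u ∈ S ∧ w ∈ S
    · -- replace u, w by z
      have hvS : v ∉ S := fun hvS => hS (Finset.mem_coe.2 hb.1) (Finset.mem_coe.2 hvS)
        (G.ne_of_adj huv) huv
      have hneg : S.filter (fun x => ¬ foldP u v w x) = {u, w} := by
        ext x
        simp only [Finset.mem_filter, Finset.mem_insert, Finset.mem_singleton, foldP, not_and_or,
          not_not]
        constructor
        · rintro ⟨hxS, rfl | rfl | rfl⟩
          · exact Or.inl rfl
          · exact absurd hxS hvS
          · exact Or.inr rfl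
        · rintro (rfl | rfl)
          · exact ⟨hb.1, Or.inl rfl⟩
          · exact ⟨hb.2, Or.inr (Or.inr rfl)⟩
      have hnegcard : (S.filter (fun x => ¬ foldP u v w x)).card = 2 := by
        rw [hneg, Finset.card_insert_of_notMem (by simp [hne]), Finset.card_singleton]
      have hS2 : 2 ≤ S.card := by omega
      have hzT0 : (Sum.inr () : {x : V // x ≠ u ∧ x ≠ v ∧ x ≠ w} ⊕ Unit) ∉ T0 := by
        intro h
        obtain ⟨a, ha, -⟩ := hmemT0 _ h
        exact absurd ha (by simp)
      set T : Finset ({x : V // x ≠ u ∧ x ≠ v ∧ x ≠ w} ⊕ Unit) :=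
        insert (Sum.inr ()) T0 with hTdef
      have hTind : IsIndepSet G' ↑T := by
        intro x hx y hy hxy
        simp only [hTdef, Finset.coe_insert, Set.mem_insert_iff, Finset.mem_coe] at hx hy
        have key : ∀ a : {x : V // x ≠ u ∧ x ≠ v ∧ x ≠ w}, a.1 ∈ S →
            ¬ G'.Adj (Sum.inl a) (Sum.inr ()) := by
          intro a haS hadj
          rcases (hadj_lr a).1 hadj with h | h
          · exact hS haS (Finset.mem_coe.2 hb.1) a.2.1 h
          · exact hS haS (Finset.mem_coe.2 hb.2) a.2.2.2 h
        rcases hx with rfl | hx <;> rcases hy with rfl | hy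
        · exact absurd rfl hxy
        · obtain ⟨a, rfl, haS⟩ := hmemT0 y hy
          exact fun h => key a haS h.symm
        · obtain ⟨a, rfl, haS⟩ := hmemT0 x hx
          exact key a haS
        · exact hT0ind (Finset.mem_coe.2 hx) (Finset.mem_coe.2 hy) hxy
      have hTcard : T.card = T0.card + 1 := Finset.card_insert_of_notMem hzT0
      have := card_le_indepNum hTind
      omega
    · -- at most one of u, v, w is in S
      have hone : (S.filter (fun x => ¬ foldP u v w x)).card ≤ 1 := by
        apply Finset.card_le_one.2
        intro x hx y hy
        obtain ⟨hxS, hx3⟩ := Finset.mem_filter.1 hx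
        obtain ⟨hyS, hy3⟩ := Finset.mem_filter.1 hy
        simp only [foldP, not_and_or, not_not] at hx3 hy3
        have pair : ∀ a b : V, a ∈ S → b ∈ S → G.Adj a b → False := by
          intro a b haS hbS hadj
          exact hS (Finset.mem_coe.2 haS) (Finset.mem_coe.2 hbS) (G.ne_of_adj hadj) hadj
        rcases hx3 with rfl | rfl | rfl <;> rcases hy3 with rfl | rfl | rfl
        · rfl
        · exact absurd huv (fun h => pair _ _ hxS hyS h)
        · exact absurd hb (fun h => h ⟨hxS, hyS⟩)
        · exact absurd huv (fun h => pair _ _ hyS hxS h)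
        · rfl
        · exact absurd hvw (fun h => pair _ _ hxS hyS h)
        · exact absurd hb (fun h => h ⟨hyS, hxS⟩)
        · exact absurd hvw (fun h => pair _ _ hyS hxS h)
        · rfl
      have := card_le_indepNum hT0ind
      omega
  omega
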